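/- Let 𝕀 = I-script_{i in I}(M_i) be a semi-direct product structure and let U = U_{i in I}(M_i) be the corresponding structure with unary predicates on the same domain. Suppose a-bar, b-bar are m-tuples from 𝕀 with the same complete quantifier-free type in the (L1 ∪ {E})-reduct 𝕀^red. Then: (i) gr(a-bar) = gr(b-bar) if and only if a-bar and b-bar have the same complete quantifier-free type in U; and (ii) gr(a-bar) is isomorphic to gr(b-bar) as L2-structures if and only if a-bar and b-bar have the same complete quantifier-free type in 𝕀. -/

import Mathlib

open FirstOrder FirstOrder.Language FirstOrder.Language.Structure CategoryTheory

namespace SRPaper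

/-- Two tuples from `M` have the same complete quantifier-free type:
they satisfy the same quantifier-free formulas. -/
def SameQfTp (L : Language) (M : Type*) [L.Structure M] {n : ℕ} (a b : Fin n → M) : Prop :=
  ∀ φ : L.Formula (Fin n), φ.IsQF → (φ.Realize a ↔ φ.Realize b)

/-- A map is quantifier-free-type-preserving if tuples with the same complete
quantifier-free type are sent to tuples with the same complete quantifier-free type. -/
def QfTpPreserving (LA : Language) (A : Type*) [LA.Structure A]
    (LB : Language) (B : Type*) [LB.Structure B] (h : A → B) : Prop :=
  ∀ (n : ℕ) (a b : Fin n → A), SameQfTp LA A a b → SameQfTp LB B (h ∘ a) (h ∘ b)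

/-- `g : A → B` and `f : B → A` witness that `A` is a semi-retraction of `B`. -/
def SemiRetractionWitness (LA : Language) (A : Type*) [LA.Structure A]
    (LB : Language) (B : Type*) [LB.Structure B] (g : A → B) (f : B → A) : Prop :=
  Function.Injective g ∧ Function.Injective f ∧
    QfTpPreserving LA A LB B g ∧ QfTpPreserving LB B LA A f ∧
    ∀ (n : ℕ) (φ : LA.Formula (Fin n)), φ.IsQF →
      ∀ s : Fin n → A, φ.Realize s → φ.Realize (f ∘ g ∘ s)

/-- `A` is a semi-retraction of `B`. -/
def IsSemiRetractionOf (LA : Language) (A : Type*) [LA.Structure A]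
    (LB : Language) (B : Type*) [LB.Structure B] : Prop :=
  ∃ (g : A → B) (f : B → A), SemiRetractionWitness LA A LB B g f

/-- The Ramsey property for a class of structures `K`: for all `A B ∈ K` and `k ≥ 1` there is
`C ∈ K` such that every `k`-coloring of substructures of `C` admits a copy `B'` of `B` in `C`
on which the color of copies of `A` is constant. -/
def RamseyClass (L : Language) (K : Set (Bundled L.Structure)) : Prop :=
  ∀ A B : Bundled L.Structure, A ∈ K → B ∈ K → ∀ k : ℕ, 1 ≤ k →
    ∃ C : Bundled L.Structure, C ∈ K ∧
      ∀ c : L.Substructure C → Fin k,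
        ∃ B' : L.Substructure C, Nonempty (B ≃[L] B') ∧
          ∀ A₁ A₂ : L.Substructure C, A₁ ≤ B' → A₂ ≤ B' →
            Nonempty (A ≃[L] A₁) → Nonempty (A ≃[L] A₂) → c A₁ = c A₂

/-- A countable structure has the Ramsey property if its age does. -/
def HasRP (L : Language) (M : Type*) [L.Structure M] : Prop :=
  RamseyClass L (L.age M)

/-- `(a i : i ∈ I)` is an `I`-indexed indiscernible set of `d`-tuples in `U`. -/
def IndexedIndiscernible (L' : Language) (I : Type*) [L'.Structure I]
    (L : Language) (U : Type*) [L.Structure U] (d : ℕ) (a : I → Fin d → U) : Prop :=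
  ∀ (n : ℕ) (ι κ : Fin n → I), SameQfTp L' I ι κ →
    ∀ φ : L.Formula (Fin n × Fin d),
      (φ.Realize fun p => a (ι p.1) p.2) ↔ (φ.Realize fun p => a (κ p.1) p.2)

/-- `Y` realizes the EM-type of `X`: any formula satisfied by all `X`-tuples whose index tuple
has a given complete quantifier-free type in `I` is satisfied by the corresponding `Y`-tuple. -/
def LocallyBased (L' : Language) (I : Type*) [L'.Structure I]
    (L : Language) (U : Type*) [L.Structure U] (d : ℕ) (X Y : I → Fin d → U) : Prop :=
  ∀ (n : ℕ) (φ : L.Formula (Fin n × Fin d)) (ι : Fin n → I),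
    (∀ κ : Fin n → I, SameQfTp L' I ι κ → φ.Realize fun p => X (κ p.1) p.2) →
    (φ.Realize fun p => Y (ι p.1) p.2)

/-- `U` realizes every finitely-satisfiable set of formulas in one free variable with
countably many parameters: "sufficient saturation" for countable index structures. -/
def AlephOneSaturated (L : Language) (U : Type*) [L.Structure U] : Prop :=
  ∀ (p : ℕ → U) (Φ : Set (L.Formula (ℕ ⊕ Fin 1))),
    (∀ Φ₀ : Finset (L.Formula (ℕ ⊕ Fin 1)), ↑Φ₀ ⊆ Φ →
      ∃ x : U, ∀ φ ∈ Φ₀, Formula.Realize φ (Sum.elim p fun _ => x)) →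
    ∃ x : U, ∀ φ ∈ Φ, Formula.Realize φ (Sum.elim p fun _ => x)

/-- `I`-indexed indiscernible sets have the modeling property: in any sufficiently saturated
structure `U`, any `I`-indexed set of same-length tuples admits an `I`-indexed indiscernible
set in `U` locally based on it. -/
def ModelingProperty (L' : Language) (I : Type*) [L'.Structure I] : Prop :=
  ∀ (L : FirstOrder.Language.{0, 0}) (U : Type) [L.Structure U], AlephOneSaturated L U →
    ∀ (d : ℕ) (X : I → Fin d → U),
      ∃ Y : I → Fin d → U,
        IndexedIndiscernible L' I L U d Y ∧ LocallyBased L' I L U d X Y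

end SRPaper

namespace SRPaper

/-! ### Disjoint unions and semi-direct product structures

An "ordered `L`-structure" is modelled as a type with an `L.Structure` instance (for the
relations other than `<`) together with a `LinearOrder` instance (interpreting `<`); its full
language is `L.sum Language.order`. -/

attribute [local instance] FirstOrder.Language.orderStructure

/-- Relation symbols `E`: a single binary symbol. -/
inductive EqSymb : ℕ → Type
  | E : EqSymb 2

/-- The language `{E}` with one binary relation. -/
def langE : Language := ⟨fun _ => Empty, EqSymb⟩

/-- Unary predicate symbols `P i` for `i : O`. -/
inductive PredSymb (O : Type) : ℕ → Type
  | P (i : O) : PredSymb O 1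

/-- The language `{P_i : i ∈ O}` of unary predicates. -/
def langP (O : Type) : Language := ⟨fun _ => Empty, PredSymb O⟩

/-- A single binary relation symbol (for graphs). -/
inductive GrSymb : ℕ → Type
  | adj : GrSymb 2

/-- The language of graphs: one binary relation. -/
def langGr : Language := ⟨fun _ => Empty, GrSymb⟩

instance : langGr.IsRelational := fun _ => inferInstanceAs (IsEmpty Empty)

section Constructions

variable (O : Type) [LinearOrder O]

/-- Interpretation of a relational language `L1` on the disjoint union `Σₗ i, M i`,
where each relation is computed fiberwise (and fails on tuples meeting several fibers). -/
def fiberStructure (L1 : Language) [L1.IsRelational] (M : O → Type)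
    [∀ i, L1.Structure (M i)] : L1.Structure (Σₗ i, M i) where
  funMap := fun f _ => isEmptyElim f
  RelMap := fun {n} r v =>
    ∃ (i : O) (w : Fin n → M i), (∀ k, v k = toLex ⟨i, w k⟩) ∧ Structure.RelMap r w

/-- Interpretation of a relational language `L2` on the disjoint union `Σₗ i, M i` via the
projection to the index structure `O`. -/
def projStructure (L2 : Language) [L2.IsRelational] [L2.Structure O] (M : O → Type) :
    L2.Structure (Σₗ i, M i) where
  funMap := fun f _ => isEmptyElim f
  RelMap := fun {n} r v => Structure.RelMap r fun k => (ofLex (v k)).1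

/-- Interpretation of `E` on `Σₗ i, M i`: the equivalence relation whose classes are the
fibers `M i`. -/
def eqClassStructure (M : O → Type) : langE.Structure (Σₗ i, M i) where
  funMap := fun f _ => Empty.elim f
  RelMap := fun {n} r v =>
    match n, r, v with
    | _, EqSymb.E, v => (ofLex (v 0)).1 = (ofLex (v 1)).1

/-- Interpretation of the predicates `P i` on `Σₗ i, M i`: `P i` names the fiber `M i`. -/
def predStructure (M : O → Type) : (langP O).Structure (Σₗ i, M i) where
  funMap := fun f _ => Empty.elim f
  RelMap := fun {n} r v =>
    match n, r, v with
    | _, PredSymb.P i, v => (ofLex (v 0)).1 = i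

/-- The language of `U_{i ∈ O}(M_i)`: the (common) language of the `M_i`, the order `<`,
and the unary predicates `P_i`. -/
def langU (L1 : Language) (O : Type) : Language := (L1.sum Language.order).sum (langP O)

/-- The structure `U_{i ∈ O}(M_i)` on the disjoint union `Σₗ i, M i`: relations of `L1` are
computed fiberwise, `<` is the lexicographic order (fibers are convex, ordered by `O`), and
`P i` names the fiber `M i`. -/
instance uStructure (L1 : Language) [L1.IsRelational] (M : O → Type)
    [∀ i, L1.Structure (M i)] [∀ i, LinearOrder (M i)] :
    (langU L1 O).Structure (Σₗ i, M i) :=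
  letI := fiberStructure O L1 M
  letI := predStructure O M
  inferInstanceAs (((L1.sum Language.order).sum (langP O)).Structure (Σₗ i, M i))

/-- The language `L1 ∪ {<} ∪ {E}` (the reduct language of a semi-direct product, and the
language of `O(M_i | i ∈ I)` when the index structure is a pure linear order). -/
def langRed (L1 : Language) : Language := (L1.sum Language.order).sum langE

/-- The `L1 ∪ {<} ∪ {E}`-structure on `Σₗ i, M i`: relations of `L1` fiberwise, `<` the
lexicographic order, `E` the equivalence relation whose classes are the fibers.  For a pure
linear order index this is the structure `O(M_i | i ∈ O)`. -/
instance redStructure (L1 : Language) [L1.IsRelational] (M : O → Type)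
    [∀ i, L1.Structure (M i)] [∀ i, LinearOrder (M i)] :
    (langRed L1).Structure (Σₗ i, M i) :=
  letI := fiberStructure O L1 M
  letI := eqClassStructure O M
  inferInstanceAs (((L1.sum Language.order).sum langE).Structure (Σₗ i, M i))

/-- The language `L2 ∪ L1 ∪ {E}` (with the shared order `<`) of a semi-direct product
structure. -/
def langSD (L1 L2 : Language) : Language := (langRed L1).sum L2

/-- The semi-direct product structure `𝕀 = I-script_{i ∈ I}(M_i)` on `Σₗ i, M i`:
relations of `L1` fiberwise, `<` the lexicographic order, `E` the fiber equivalence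
relation, and relations of `L2` computed from the index structure via the projection. -/
instance sdStructure (L2 : Language) [L2.IsRelational] [L2.Structure O]
    (L1 : Language) [L1.IsRelational] (M : O → Type)
    [∀ i, L1.Structure (M i)] [∀ i, LinearOrder (M i)] :
    (langSD L1 L2).Structure (Σₗ i, M i) :=
  letI := projStructure O L2 M
  inferInstanceAs (((langRed L1).sum L2).Structure (Σₗ i, M i))

end Constructions

/-- The underlying set of the "underlying graph" `gr(ā)` of a tuple from a semi-direct
product structure: the set of indices whose fiber meets the tuple. -/
def grSet {O : Type} {M : O → Type} {n : ℕ} (a : Fin n → (Σₗ i, M i)) : Set O :=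
  {t | ∃ k, (ofLex (a k)).1 = t}

/-- The full language of ordered graphs: one binary relation and the order. -/
def langOG : Language := langGr.sum Language.order

/-- A finite or countable `langOG`-structure is an ordered graph when the binary relation is
irreflexive and symmetric and the order symbol is interpreted as a linear order. -/
def IsOrderedGraph (N : Type*) [langOG.Structure N] : Prop :=
  (∀ x : N, ¬ Structure.RelMap (L := langOG) (Sum.inl GrSymb.adj) ![x, x]) ∧
  (∀ x y : N, Structure.RelMap (L := langOG) (Sum.inl GrSymb.adj) ![x, y] →
    Structure.RelMap (L := langOG) (Sum.inl GrSymb.adj) ![y, x]) ∧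
  IsLinearOrder N (fun a b =>
    Structure.RelMap (L := langOG) (Sum.inr Language.orderRel.le) ![a, b])

/-- A random ordered graph: a countable structure that is a Fraïssé limit of the class of
finite ordered graphs. -/
def IsRandomOrderedGraph (G : Type) [langGr.Structure G] [LinearOrder G] [Countable G] : Prop :=
  letI : langOG.Structure G := inferInstanceAs ((langGr.sum Language.order).Structure G)
  haveI : ∀ l, IsEmpty (langOG.Functions l) := fun _ => inferInstanceAs (IsEmpty (Empty ⊕ Empty))
  IsFraisseLimit {N : CategoryTheory.Bundled langOG.Structure | Finite N ∧ IsOrderedGraph N} G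

end SRPaper

/-!
Everything is decided by the tuples of fiber indices `p = fiberIndex a` and `q = fiberIndex b`.
The reduct type fixes `<` and `E` on the tuples, and since fibers are convex this fixes the
order pattern of `p` and `q`. In `U` the predicates `P_i` add exactly the atoms `p k = i`, and
in `𝕀` the relations of `L2` add exactly the `L2`-atoms of `p`. The ranges of `p` and `q` are
finite linear orders with the same pattern, so the only order isomorphism between them is
`p k ↦ q k`: equal ranges force `p = q`, and `gr(a) ≅ gr(b)` holds exactly when `p k ↦ q k`
preserves the relations of `L2`.
-/

namespace SRPaper

attribute [local instance] FirstOrder.Language.orderStructure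

instance : langE.IsRelational := fun _ => inferInstanceAs (IsEmpty Empty)

instance (O : Type) : (langP O).IsRelational := fun _ => inferInstanceAs (IsEmpty Empty)

instance (L1 : Language) [L1.IsRelational] (O : Type) : (langU L1 O).IsRelational :=
  inferInstanceAs (((L1.sum Language.order).sum (langP O)).IsRelational)

instance (L1 : Language) [L1.IsRelational] : (langRed L1).IsRelational :=
  inferInstanceAs (((L1.sum Language.order).sum langE).IsRelational)

instance (L1 L2 : Language) [L1.IsRelational] [L2.IsRelational] : (langSD L1 L2).IsRelational :=
  inferInstanceAs (((langRed L1).sum L2).IsRelational)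

section QfType

variable {L : Language} {M : Type*} [L.Structure M] {m : ℕ} {a b : Fin m → M}

lemma SameQfTp.relMap_iff (h : SameQfTp L M a b) {n : ℕ} (R : L.Relations n)
    (v : Fin n → Fin m) : RelMap R (a ∘ v) ↔ RelMap R (b ∘ v) := by
  simpa [Formula.realize_rel, Function.comp_def] using
    h (R.formula fun i => Term.var (v i)) (BoundedFormula.IsAtomic.rel R _).isQF

lemma SameQfTp.eq_iff (h : SameQfTp L M a b) (k l : Fin m) : a k = a l ↔ b k = b l := by
  simpa [Formula.realize_equal] using
    h (Term.equal (Term.var k) (Term.var l)) (BoundedFormula.IsAtomic.equal _ _).isQF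

lemma Term.exists_eq_var_of_isRelational [L.IsRelational] {α : Type*}
    (t : L.Term (α ⊕ Fin 0)) : ∃ k : α, t = Term.var (Sum.inl k) := by
  cases t with
  | var x =>
    rcases x with k | i
    · exact ⟨k, rfl⟩
    · exact i.elim0
  | func f _ => exact isEmptyElim f

lemma sameQfTp_of_eq_iff_of_relMap_iff [L.IsRelational]
    (heq : ∀ k l, a k = a l ↔ b k = b l)
    (hrel : ∀ (n : ℕ) (R : L.Relations n) (v : Fin n → Fin m),
      RelMap R (a ∘ v) ↔ RelMap R (b ∘ v)) :
    SameQfTp L M a b := by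
  intro φ hφ
  induction hφ with
  | falsum => exact Iff.rfl
  | of_isAtomic h =>
    cases h with
    | equal t₁ t₂ =>
      obtain ⟨k, rfl⟩ := Term.exists_eq_var_of_isRelational t₁
      obtain ⟨l, rfl⟩ := Term.exists_eq_var_of_isRelational t₂
      simpa [Formula.Realize, BoundedFormula.Realize, Term.bdEqual, Term.realize] using heq k l
    | rel R ts =>
      choose v hv using fun i => Term.exists_eq_var_of_isRelational (ts i)
      obtain rfl : ts = fun i => Term.var (Sum.inl (v i)) := funext hv
      simpa [Formula.Realize, Term.realize, Function.comp_def] using hrel _ R v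
  | imp _ _ ih₁ ih₂ => exact imp_congr ih₁ ih₂

end QfType

section IndexOrder

variable {I ι : Type*} [LinearOrder I] {p q : ι → I}

lemma exists_orderIso_range (h : ∀ k l, p k ≤ p l ↔ q k ≤ q l) :
    ∃ e : Set.range p ≃o Set.range q, ∀ k, (e ⟨p k, Set.mem_range_self k⟩ : I) = q k := by
  have heq : ∀ k l, p k = p l ↔ q k = q l := fun k l => by
    simp only [le_antisymm_iff, h]
  let f : Set.range p → Set.range q := fun x => ⟨q x.2.choose, Set.mem_range_self _⟩
  have hf : ∀ k, (f ⟨p k, Set.mem_range_self k⟩ : I) = q k := fun k =>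
    (heq _ k).1 (Set.mem_range_self k).choose_spec
  have hf_strictMono : StrictMono f := by
    rintro ⟨_, k, rfl⟩ ⟨_, l, rfl⟩ hkl
    change p k < p l at hkl
    rw [← Subtype.coe_lt_coe, hf, hf]
    simpa only [lt_iff_not_ge, h] using hkl
  refine ⟨hf_strictMono.orderIsoOfSurjective f ?_, hf⟩
  rintro ⟨_, k, rfl⟩
  exact ⟨_, Subtype.ext (hf k)⟩

lemma orderIso_range_apply [Finite ι] (h : ∀ k l, p k ≤ p l ↔ q k ≤ q l)
    (e : Set.range p ≃o Set.range q) (k : ι) : (e ⟨p k, Set.mem_range_self k⟩ : I) = q k := by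
  obtain ⟨e₀, he₀⟩ := exists_orderIso_range h
  rw [Subsingleton.elim e e₀, he₀]

lemma eq_of_range_eq_of_le_iff [Finite ι] (h : ∀ k l, p k ≤ p l ↔ q k ≤ q l)
    (hr : Set.range p = Set.range q) : p = q :=
  funext fun k => orderIso_range_apply h (OrderIso.setCongr _ _ hr) k

end IndexOrder

section Closure

variable {I ι : Type*} [LinearOrder I] {L2 : Language} [L2.IsRelational] [L2.Structure I]

def Substructure.orderIsoOfEquiv {S T : (L2.sum Language.order).Substructure I}
    (F : S ≃[L2.sum Language.order] T) : S ≃o T :=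
  { F.toEquiv with map_rel_iff' := fun {x y} => F.map_rel (Sum.inr .le) ![x, y] }

def closureOrderIso (s : Set I) : Substructure.closure (L2.sum Language.order) s ≃o s :=
  OrderIso.setCongr _ s (Substructure.closure_eq_of_isRelational _ s)

variable {p q : ι → I}

lemma nonempty_equiv_closure_range_iff [Finite ι] (h : ∀ k l, p k ≤ p l ↔ q k ≤ q l) :
    Nonempty (Substructure.closure (L2.sum Language.order) (Set.range p) ≃[L2.sum Language.order]
      Substructure.closure (L2.sum Language.order) (Set.range q)) ↔
    ∀ (n : ℕ) (R : L2.Relations n) (v : Fin n → ι), RelMap R (p ∘ v) ↔ RelMap R (q ∘ v) := by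
  constructor
  · rintro ⟨F⟩ n R v
    let e := (closureOrderIso (L2 := L2) (Set.range p)).symm.trans
      ((Substructure.orderIsoOfEquiv F).trans (closureOrderIso (Set.range q)))
    have hF : ∀ k, (F ⟨p k, by simp⟩ : I) = q k := orderIso_range_apply h e
    let x : Fin n → Substructure.closure (L2.sum Language.order) (Set.range p) :=
      fun i => ⟨p (v i), by simp⟩
    calc RelMap R (p ∘ v) ↔ RelMap (L := L2.sum Language.order) (Sum.inl R) x := Iff.rfl
      _ ↔ RelMap (L := L2.sum Language.order) (Sum.inl R) (F ∘ x) := (F.map_rel _ x).symm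
      _ ↔ RelMap R (q ∘ v) := by
        change RelMap R (fun i => (F (x i) : I)) ↔ _
        simp only [x, hF]
        rfl
  · intro hrel
    obtain ⟨e, he⟩ := exists_orderIso_range h
    let e' := (closureOrderIso (L2 := L2) (Set.range p)).trans
      (e.trans (closureOrderIso (L2 := L2) (Set.range q)).symm)
    have he' : ∀ (x : Substructure.closure (L2.sum Language.order) (Set.range p)) k,
        (x : I) = p k → (e' x : I) = q k := by
      rintro ⟨_, _⟩ k rfl
      exact he k
    refine ⟨⟨e'.toEquiv, fun f => isEmptyElim f, ?_⟩⟩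
    rintro n (R | r) x
    · choose ks hks using fun i => (Substructure.mem_closure_iff_of_isRelational _ _ _).1 (x i).2
      have hx : ∀ i, (e' (x i) : I) = q (ks i) := fun i => he' _ _ (hks i).symm
      change RelMap R (fun i => (e' (x i) : I)) ↔ RelMap R (fun i => (x i : I))
      simp only [hx, ← hks]
      exact (hrel n R ks).symm
    · cases r
      exact e'.le_iff_le (x := x 0) (y := x 1)

end Closure

section SemiDirectProduct

variable {O : Type} {M : O → Type}

def fiberIndex {n : ℕ} (a : Fin n → Σₗ i, M i) : Fin n → O := fun k => (ofLex (a k)).1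

lemma grSet_eq_range {n : ℕ} (a : Fin n → Σₗ i, M i) : grSet a = Set.range (fiberIndex a) := rfl

variable [LinearOrder O] [∀ i, LinearOrder (M i)]

lemma ofLex_fst_le_iff (x y : Σₗ i, M i) :
    (ofLex x).1 ≤ (ofLex y).1 ↔ x ≤ y ∨ (ofLex x).1 = (ofLex y).1 := by
  rw [Sigma.Lex.le_def]
  constructor
  · intro hxy
    rcases hxy.lt_or_eq with h | h
    · exact Or.inl (Or.inl h)
    · exact Or.inr h
  · rintro ((h | ⟨h, -⟩) | h)
    exacts [h.le, h.le, h.le]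

variable {L1 : Language} [L1.IsRelational] [∀ i, L1.Structure (M i)] {m : ℕ}
  {a b : Fin m → Σₗ i, M i}

lemma fiberIndex_le_iff_of_sameQfTp_langRed (hred : SameQfTp (langRed L1) (Σₗ i, M i) a b)
    (k l : Fin m) : fiberIndex a k ≤ fiberIndex a l ↔ fiberIndex b k ≤ fiberIndex b l := by
  have hle : a k ≤ a l ↔ b k ≤ b l := hred.relMap_iff (Sum.inl (Sum.inr .le)) ![k, l]
  have hE : fiberIndex a k = fiberIndex a l ↔ fiberIndex b k = fiberIndex b l :=
    hred.relMap_iff (Sum.inr EqSymb.E) ![k, l]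
  simp only [fiberIndex] at hE ⊢
  rw [ofLex_fst_le_iff, ofLex_fst_le_iff, hle, hE]

lemma sameQfTp_langU_iff_of_sameQfTp_langRed (hred : SameQfTp (langRed L1) (Σₗ i, M i) a b) :
    SameQfTp (langU L1 O) (Σₗ i, M i) a b ↔ fiberIndex a = fiberIndex b := by
  constructor
  · intro hU
    funext k
    exact ((hU.relMap_iff (Sum.inr (PredSymb.P (fiberIndex a k))) ![k]).1 rfl).symm
  · intro h
    refine sameQfTp_of_eq_iff_of_relMap_iff hred.eq_iff ?_
    rintro n (r | r) v
    · exact hred.relMap_iff (Sum.inl r) v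
    · cases r with
      | P i =>
        change fiberIndex a (v 0) = i ↔ fiberIndex b (v 0) = i
        rw [h]

lemma sameQfTp_langSD_iff_of_sameQfTp_langRed {L2 : Language} [L2.IsRelational] [L2.Structure O]
    (hred : SameQfTp (langRed L1) (Σₗ i, M i) a b) :
    SameQfTp (langSD L1 L2) (Σₗ i, M i) a b ↔
      ∀ (n : ℕ) (R : L2.Relations n) (v : Fin n → Fin m),
        RelMap R (fiberIndex a ∘ v) ↔ RelMap R (fiberIndex b ∘ v) := by
  refine ⟨fun hSD n R v => hSD.relMap_iff (Sum.inr R) v, fun h => ?_⟩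
  refine sameQfTp_of_eq_iff_of_relMap_iff hred.eq_iff ?_
  rintro n (r | R) v
  · exact hred.relMap_iff r v
  · exact h n R v

end SemiDirectProduct

end SRPaper

attribute [local instance] FirstOrder.Language.orderStructure

open SRPaper in
theorem statement12_general (I : Type) [LinearOrder I]
    (L2 : Language) [L2.IsRelational] [L2.Structure I]
    (L1 : Language) [L1.IsRelational] (M : I → Type)
    [∀ i, L1.Structure (M i)] [∀ i, LinearOrder (M i)]
    (m : ℕ) (a b : Fin m → (Σₗ i, M i))
    (hred : SameQfTp (langRed L1) (Σₗ i, M i) a b) :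
    (grSet a = grSet b ↔ SameQfTp (langU L1 I) (Σₗ i, M i) a b) ∧
      (Nonempty
          ((Substructure.closure (L2.sum Language.order) (grSet a)) ≃[L2.sum Language.order]
            (Substructure.closure (L2.sum Language.order) (grSet b))) ↔
        SameQfTp (langSD L1 L2) (Σₗ i, M i) a b) := by
  have hle := fiberIndex_le_iff_of_sameQfTp_langRed hred
  rw [sameQfTp_langU_iff_of_sameQfTp_langRed hred, sameQfTp_langSD_iff_of_sameQfTp_langRed hred,
    grSet_eq_range, grSet_eq_range]
  exact ⟨⟨eq_of_range_eq_of_le_iff hle, congrArg Set.range⟩, nonempty_equiv_closure_range_iff hle⟩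

open SRPaper in
/-- For `m`-tuples `a`, `b` from the semi-direct product `𝕀 = 𝓘_{i∈I}(M_i)`
with the same complete quantifier-free type in the `L1 ∪ {E}`-reduct `𝕀^red`:
(i) `gr(a) = gr(b)` iff `a` and `b` have the same complete quantifier-free type in
`U_{i∈I}(M_i)`; and (ii) `gr(a) ≅ gr(b)` (as ordered `L2`-structures) iff `a` and `b` have
the same complete quantifier-free type in `𝕀`. -/
theorem statement12 (I : Type) [LinearOrder I] [Countable I]
    (L2 : Language) [L2.IsRelational] [L2.Structure I]
    (L1 : Language) [L1.IsRelational] (M : I → Type)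
    [∀ i, L1.Structure (M i)] [∀ i, LinearOrder (M i)] [∀ i, Countable (M i)]
    (K : Set (CategoryTheory.Bundled (L1.sum Language.order).Structure))
    (hK : ∀ i, (L1.sum Language.order).age (M i) = K)
    (m : ℕ) (a b : Fin m → (Σₗ i, M i))
    (hred : SameQfTp (langRed L1) (Σₗ i, M i) a b) :
    (grSet a = grSet b ↔ SameQfTp (langU L1 I) (Σₗ i, M i) a b) ∧
      (Nonempty
          ((Substructure.closure (L2.sum Language.order) (grSet a)) ≃[L2.sum Language.order]
            (Substructure.closure (L2.sum Language.order) (grSet b))) ↔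
        SameQfTp (langSD L1 L2) (Σₗ i, M i) a b) :=
  statement12_general I L2 L1 M m a b hred
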